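/- Let Ω ⊆ ℝᵐ be open with data (γ, ℓ, ℓ², 𝐘) in a chart, Σ := {x ∈ Ω : x₁ = 0}, U := {X ∈ ℝᵐ : X₁ = 0}, and let Γ be the Christoffel symbols of a torsion-free connection ∇ compatible with the data via the symmetric tensor field K (i.e. (∇γ)(X;Z,W) = −ℓ(Z)K(X,W) − ℓ(W)K(X,Z) and (∇ℓ)(X,Z) = 𝐘(X,Z) + F(X,Z) − ℓ²·K(X,Z) at every point). Then for any two normal pairs 𝔱₁ = (T₁,C₁), 𝔱₂ = (T₂,C₂) of Σ, the torsion one-forms satisfy, at every p ∈ Σ ∩ Ω and for every X ∈ U: ℸ₁₂|_p(X) + ℸ₂₁|_p(X) = D(M₁₂)(p)(X), where M₁₂ := γ(T₁,T₂) + C₁·ℓ(T₂) + C₂·ℓ(T₁) + C₁·C₂·ℓ² : Ω → ℝ. -/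

import Mathlib

/-- The covariant derivative of the vector field `T` along direction `X` with
respect to the connection with Christoffel symbols `Γ`:
`∇_X T(p) = DT(p)(X) + Γ_p(X, T(p))`. -/
noncomputable def covD {m : ℕ}
    (Γ : (Fin m → ℝ) → (Fin m → ℝ) →L[ℝ] (Fin m → ℝ) →L[ℝ] (Fin m → ℝ))
    (T : (Fin m → ℝ) → (Fin m → ℝ)) (p X : Fin m → ℝ) : Fin m → ℝ :=
  fderiv ℝ T p X + Γ p X (T p)

/-- The tensor `F_p(X,Z) = (1/2)((Dℓ(p)(X))(Z) − (Dℓ(p)(Z))(X))`. -/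
noncomputable def Ftens {m : ℕ}
    (ℓ : (Fin m → ℝ) → (Fin m → ℝ) →L[ℝ] ℝ) (p X Z : Fin m → ℝ) : ℝ :=
  (1 / 2) * (fderiv ℝ ℓ p X Z - fderiv ℝ ℓ p Z X)

/-- The torsion one-form `ℸ_{ij}` of `Σ` with respect to the pairs
`𝔱_i = (Ti,Ci)`, `𝔱_j = (Tj,Cj)`:
`ℸ_{ij}|_p(X) = (ℓ(T_i) + C_i ℓ²)(DC_j(X) − K(X,T_j)) + C_i ℓ(∇_X T_j)
  + γ(T_i, ∇_X T_j) + (1/2) C_i C_j Dℓ²(X) + C_j Π(X,T_i)` with `Π = 𝐘 + F`. -/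
noncomputable def torsionOF {m : ℕ}
    (γ : (Fin m → ℝ) → (Fin m → ℝ) →L[ℝ] (Fin m → ℝ) →L[ℝ] ℝ)
    (ℓ : (Fin m → ℝ) → (Fin m → ℝ) →L[ℝ] ℝ)
    (ℓ2 : (Fin m → ℝ) → ℝ)
    (Yd K : (Fin m → ℝ) → (Fin m → ℝ) → (Fin m → ℝ) → ℝ)
    (Γ : (Fin m → ℝ) → (Fin m → ℝ) →L[ℝ] (Fin m → ℝ) →L[ℝ] (Fin m → ℝ))
    (Ti : (Fin m → ℝ) → (Fin m → ℝ)) (Ci : (Fin m → ℝ) → ℝ)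
    (Tj : (Fin m → ℝ) → (Fin m → ℝ)) (Cj : (Fin m → ℝ) → ℝ)
    (p X : Fin m → ℝ) : ℝ :=
  (ℓ p (Ti p) + Ci p * ℓ2 p) * (fderiv ℝ Cj p X - K p X (Tj p))
    + Ci p * ℓ p (covD Γ Tj p X)
    + γ p (Ti p) (covD Γ Tj p X)
    + (1 / 2) * (Ci p * Cj p) * fderiv ℝ ℓ2 p X
    + Cj p * (Yd p X (Ti p) + Ftens ℓ p X (Ti p))

/-- for a torsion-free connection `∇` compatible with the data via
the symmetric tensor `K` (`∇γ = −2ℓ ⊗ₛ K` and `∇ℓ = 𝐘 + F − ℓ²K`), the torsion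
one-forms of two normal pairs of `Σ = {x₁ = 0}` satisfy
`ℸ₁₂ + ℸ₂₁ = dM₁₂` on tangent vectors, where
`M₁₂ = γ(T₁,T₂) + C₁ℓ(T₂) + C₂ℓ(T₁) + C₁C₂ℓ²`. -/
theorem torsion_symmetrized_eq_dM {m : ℕ} [NeZero m] (hm : 2 ≤ m)
    (Ω : Set (Fin m → ℝ)) (hΩ : IsOpen Ω)
    (γ : (Fin m → ℝ) → (Fin m → ℝ) →L[ℝ] (Fin m → ℝ) →L[ℝ] ℝ)
    (ℓ : (Fin m → ℝ) → (Fin m → ℝ) →L[ℝ] ℝ)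
    (ℓ2 : (Fin m → ℝ) → ℝ)
    (Yd K : (Fin m → ℝ) → (Fin m → ℝ) → (Fin m → ℝ) → ℝ)
    (Γ : (Fin m → ℝ) → (Fin m → ℝ) →L[ℝ] (Fin m → ℝ) →L[ℝ] (Fin m → ℝ))
    (hγ : ContDiffOn ℝ (⊤ : ℕ∞) γ Ω) (hℓ : ContDiffOn ℝ (⊤ : ℕ∞) ℓ Ω)
    (hℓ2 : ContDiffOn ℝ (⊤ : ℕ∞) ℓ2 Ω) (hΓ : ContDiffOn ℝ (⊤ : ℕ∞) Γ Ω)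
    (hγsym : ∀ q ∈ Ω, ∀ X Y : Fin m → ℝ, γ q X Y = γ q Y X)
    (hYsym : ∀ q ∈ Ω, ∀ X Y : Fin m → ℝ, Yd q X Y = Yd q Y X)
    (hKsym : ∀ q ∈ Ω, ∀ X Y : Fin m → ℝ, K q X Y = K q Y X)
    (hΓsym : ∀ q ∈ Ω, ∀ X Y : Fin m → ℝ, Γ q X Y = Γ q Y X)
    (hγcomp : ∀ q ∈ Ω, ∀ X Z W : Fin m → ℝ,
      fderiv ℝ γ q X Z W - γ q (Γ q X Z) W - γ q Z (Γ q X W)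
        = -(ℓ q Z * K q X W) - ℓ q W * K q X Z)
    (hℓcomp : ∀ q ∈ Ω, ∀ X Z : Fin m → ℝ,
      fderiv ℝ ℓ q X Z - ℓ q (Γ q X Z)
        = Yd q X Z + Ftens ℓ q X Z - ℓ2 q * K q X Z)
    (T₁ T₂ : (Fin m → ℝ) → (Fin m → ℝ)) (C₁ C₂ : (Fin m → ℝ) → ℝ)
    (hT₁ : ContDiffOn ℝ (⊤ : ℕ∞) T₁ Ω) (hC₁ : ContDiffOn ℝ (⊤ : ℕ∞) C₁ Ω)
    (hT₂ : ContDiffOn ℝ (⊤ : ℕ∞) T₂ Ω) (hC₂ : ContDiffOn ℝ (⊤ : ℕ∞) C₂ Ω)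
    (hNP₁ : ∀ q ∈ Ω, q 0 = 0 → ∀ X : Fin m → ℝ, X 0 = 0 →
      C₁ q * ℓ q X + γ q (T₁ q) X = 0)
    (hNP₂ : ∀ q ∈ Ω, q 0 = 0 → ∀ X : Fin m → ℝ, X 0 = 0 →
      C₂ q * ℓ q X + γ q (T₂ q) X = 0)
    (p : Fin m → ℝ) (hpΩ : p ∈ Ω) (hp0 : p 0 = 0)
    (X : Fin m → ℝ) (hX : X 0 = 0) :
    torsionOF γ ℓ ℓ2 Yd K Γ T₁ C₁ T₂ C₂ p X
        + torsionOF γ ℓ ℓ2 Yd K Γ T₂ C₂ T₁ C₁ p X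
      = fderiv ℝ (fun q => γ q (T₁ q) (T₂ q) + C₁ q * ℓ q (T₂ q)
          + C₂ q * ℓ q (T₁ q) + C₁ q * C₂ q * ℓ2 q) p X := by
  have hnh := hΩ.mem_nhds hpΩ
  have hγd : HasFDerivAt γ (fderiv ℝ γ p) p :=
    ((hγ.contDiffAt hnh).differentiableAt (by simp)).hasFDerivAt
  have hℓd : HasFDerivAt ℓ (fderiv ℝ ℓ p) p :=
    ((hℓ.contDiffAt hnh).differentiableAt (by simp)).hasFDerivAt
  have hℓ2d : HasFDerivAt ℓ2 (fderiv ℝ ℓ2 p) p :=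
    ((hℓ2.contDiffAt hnh).differentiableAt (by simp)).hasFDerivAt
  have hT₁d : HasFDerivAt T₁ (fderiv ℝ T₁ p) p :=
    ((hT₁.contDiffAt hnh).differentiableAt (by simp)).hasFDerivAt
  have hT₂d : HasFDerivAt T₂ (fderiv ℝ T₂ p) p :=
    ((hT₂.contDiffAt hnh).differentiableAt (by simp)).hasFDerivAt
  have hC₁d : HasFDerivAt C₁ (fderiv ℝ C₁ p) p :=
    ((hC₁.contDiffAt hnh).differentiableAt (by simp)).hasFDerivAt
  have hC₂d : HasFDerivAt C₂ (fderiv ℝ C₂ p) p :=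
    ((hC₂.contDiffAt hnh).differentiableAt (by simp)).hasFDerivAt
  have h12 := (hγd.clm_apply hT₁d).clm_apply hT₂d
  have hℓT₂ := hℓd.clm_apply hT₂d
  have hℓT₁ := hℓd.clm_apply hT₁d
  have hA := hC₁d.mul hℓT₂
  have hB := hC₂d.mul hℓT₁
  have hD := (hC₁d.mul hC₂d).mul hℓ2d
  have htot := ((h12.add hA).add hB).add hD
  rw [HasFDerivAt.fderiv (f := fun q => γ q (T₁ q) (T₂ q) + C₁ q * ℓ q (T₂ q)
      + C₂ q * ℓ q (T₁ q) + C₁ q * C₂ q * ℓ2 q) htot]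
  simp only [torsionOF, covD, ContinuousLinearMap.add_apply, ContinuousLinearMap.comp_apply,
    ContinuousLinearMap.flip_apply, ContinuousLinearMap.smul_apply, smul_eq_mul, map_add, Pi.mul_apply]
  have e1 := hγcomp p hpΩ X (T₁ p) (T₂ p)
  have e2 := hℓcomp p hpΩ X (T₂ p)
  have e3 := hℓcomp p hpΩ X (T₁ p)
  have s1 := hγsym p hpΩ (Γ p X (T₁ p)) (T₂ p)
  have s2 := hγsym p hpΩ (fderiv ℝ T₁ p X) (T₂ p)
  linear_combination -(e1 + C₁ p * e2 + C₂ p * e3) - s1 - s2
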